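/- arXiv:2304.05404 — 2 statements merged into one kernel-verified Lean document; each statement's English description precedes it below -/
import Mathlib

section
/- Let V be an infinite-dimensional vector space over a field K in which every element is a square, equipped with a nondegenerate symmetric bilinear form [·,·]. Then for every finite tuple of vectors b̄ = (b₁, …, bₙ), there exists a nonzero vector u ∈ V with [u, bᵢ] = 0 for all i and [u, u] = 0. -/
/-!
The vectors orthogonal to all `bᵢ` form the kernel of a map to `Kⁿ`, hence an
infinite-dimensional subspace, and it suffices to find a nonzero isotropic vector of the
restricted form. Any plane already contains one: orthogonalise a basis `v, w`; if neither
vector is isotropic, then `v + t • w` is, where `t² = -[v, v] / [w, w]`.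
-/

theorem LinearMap.finiteDimensional_of_finiteDimensional_ker {K V W : Type*} [Field K]
    [AddCommGroup V] [Module K V] [AddCommGroup W] [Module K W] (f : V →ₗ[K] W)
    [FiniteDimensional K (LinearMap.ker f)] [FiniteDimensional K (LinearMap.range f)] :
    FiniteDimensional K V :=
  have := Module.Finite.equiv f.quotKerEquivRange.symm
  Module.Finite.of_submodule_quotient (LinearMap.ker f)

theorem exists_ne_zero_notMem_span_singleton_of_not_finiteDimensional {K V : Type*} [Field K]
    [AddCommGroup V] [Module K V] (hinf : ¬ FiniteDimensional K V) :
    ∃ v w : V, v ≠ 0 ∧ w ∉ K ∙ v := by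
  have : Nontrivial V := by
    by_contra h
    have := not_nontrivial_iff_subsingleton.mp h
    exact hinf inferInstance
  obtain ⟨v, hv⟩ := exists_ne (0 : V)
  obtain ⟨w, hw⟩ : ∃ w, w ∉ K ∙ v := by
    by_contra! h
    have htop : K ∙ v = ⊤ := Submodule.eq_top_iff'.mpr h
    exact hinf (Module.Finite.equiv ((LinearEquiv.ofEq _ _ htop).trans Submodule.topEquiv))
  exact ⟨v, w, hv, hw⟩

namespace LinearMap.BilinForm

variable {K V : Type*} [Field K] [AddCommGroup V] [Module K V] {B : LinearMap.BilinForm K V}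

theorem apply_add_smul_self_eq_zero {v w : V} {t : K} (hvw : B v w = 0) (hwv : B w v = 0)
    (hw : B w w ≠ 0) (ht : t ^ 2 = -B v v / B w w) : B (v + t • w) (v + t • w) = 0 := by
  have hexp : B (v + t • w) (v + t • w) = B v v + t ^ 2 * B w w := by
    simp only [map_add, map_smul, LinearMap.add_apply, LinearMap.smul_apply, smul_eq_mul, hvw, hwv]
    ring
  rw [hexp, ht, div_mul_cancel₀ _ hw, add_neg_cancel]

theorem exists_isotropic_of_notMem_span_singleton (hB : B.IsSymm)
    (hsq : ∀ α : K, ∃ t : K, t ^ 2 = α) {v w : V} (hv : v ≠ 0) (hw : w ∉ K ∙ v) :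
    ∃ u : V, u ≠ 0 ∧ B u u = 0 := by
  by_cases hvv : B v v = 0
  · exact ⟨v, hv, hvv⟩
  set w' := w - (B w v / B v v) • v
  have hw' : w' ≠ 0 := fun h ↦
    hw (sub_eq_zero.mp h ▸ Submodule.smul_mem _ _ (Submodule.mem_span_singleton_self v))
  have hw'v : B w' v = 0 := by
    simp only [w', map_sub, map_smul, LinearMap.sub_apply, LinearMap.smul_apply, smul_eq_mul,
      div_mul_cancel₀ _ hvv, sub_self]
  by_cases hw'w' : B w' w' = 0
  · exact ⟨w', hw', hw'w'⟩
  obtain ⟨t, ht⟩ := hsq (-B v v / B w' w')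
  have hvw' : B v w' = 0 := hB.eq v w' ▸ hw'v
  refine ⟨v + t • w', fun h ↦ hvv ?_, apply_add_smul_self_eq_zero hvw' hw'v hw'w' ht⟩
  calc B v v = B v (v + t • w') := by simp [hvw']
    _ = 0 := by rw [h, map_zero]

theorem exists_isotropic_of_not_finiteDimensional (hB : B.IsSymm)
    (hsq : ∀ α : K, ∃ t : K, t ^ 2 = α) (hinf : ¬ FiniteDimensional K V) :
    ∃ u : V, u ≠ 0 ∧ B u u = 0 :=
  have ⟨_, _, hv, hw⟩ := exists_ne_zero_notMem_span_singleton_of_not_finiteDimensional hinf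
  exists_isotropic_of_notMem_span_singleton hB hsq hv hw

end LinearMap.BilinForm

theorem stmt_4_general {K V : Type*} [Field K] [AddCommGroup V] [Module K V]
    (hsq : ∀ α : K, ∃ lam : K, lam ^ 2 = α)
    (Bf : LinearMap.BilinForm K V)
    (hinf : ¬ FiniteDimensional K V)
    (hsym : ∀ u v : V, Bf u v = Bf v u)
    (n : ℕ) (b : Fin n → V) :
    ∃ u : V, u ≠ 0 ∧ (∀ i, Bf u (b i) = 0) ∧ Bf u u = 0 := by
  set f : V →ₗ[K] Fin n → K := LinearMap.pi fun i ↦ Bf.flip (b i)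
  have hker : ¬ FiniteDimensional K (LinearMap.ker f) := fun _ ↦
    hinf (f.finiteDimensional_of_finiteDimensional_ker)
  obtain ⟨⟨u, hu⟩, hu0, huu⟩ := LinearMap.BilinForm.exists_isotropic_of_not_finiteDimensional
    ((LinearMap.BilinForm.isSymm_def.mpr hsym).restrict (LinearMap.ker f)) hsq hker
  refine ⟨u, by simpa using hu0, fun i ↦ ?_, huu⟩
  simpa [f] using congr_fun (LinearMap.mem_ker.mp hu) i

/-- If every element of `K` is a square and `V` is infinite-dimensional with a
nondegenerate symmetric bilinear form, then for every finite tuple `b̄` there is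
a nonzero isotropic vector orthogonal to all entries of `b̄`. -/
theorem stmt_4 {K V : Type*} [Field K] [AddCommGroup V] [Module K V]
    (hsq : ∀ α : K, ∃ lam : K, lam ^ 2 = α)
    (Bf : LinearMap.BilinForm K V)
    (hinf : ¬ FiniteDimensional K V)
    (hsym : ∀ u v : V, Bf u v = Bf v u)
    (hnd : ∀ v : V, (∀ u : V, Bf u v = 0) → v = 0)
    (n : ℕ) (b : Fin n → V) :
    ∃ u : V, u ≠ 0 ∧ (∀ i, Bf u (b i) = 0) ∧ Bf u u = 0 :=
  stmt_4_general hsq Bf hinf hsym n b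
end

section
/- With the same inductive tuple extension of an independence relation as above, suppose full transitivity holds and symmetry holds for tuples of length ≤ n together with single elements (b̄ ⫝_A c̄ iff c̄ ⫝_A b̄ whenever len(b̄), len(c̄) ≤ n, and for single elements against arbitrary tuples). Then symmetry holds for tuples of length n+1: for b̄ of length ≤ n, b′ a single element, and c̄ of length ≤ n, c̄ ⫝_A b̄b′ iff b̄b′ ⫝_A c̄. -/
/-!
Split both sides along `b̄` followed by `b′`: transitivity turns `c̄ ⫝_A b̄b′` into
`c̄ ⫝_A b̄` and `c̄ ⫝_{Ab̄} b′`, while the inductive definition turns `b̄b′ ⫝_A c̄` into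
`b̄ ⫝_A c̄` and `b′ ⫝_{Ab̄} c̄`. The two pairs correspond by symmetry for short tuples
and for single elements.
-/

/-- Inductive extension of a single-element independence relation to tuples. -/
def IndTuple {α : Type*} (Ind : α → Set α → Set α → Prop) :
    List α → Set α → Set α → Prop
  | [], _, _ => True
  | d :: ds, A, B => Ind d A B ∧ IndTuple Ind ds (A ∪ {d}) (B ∪ {d})

/-- Tuple-versus-tuple independence: `b̄ ⫝_A c̄` means `b̄ ⫝_A A ∪ c̄`. -/
def IndTT {α : Type*} (Ind : α → Set α → Set α → Prop)
    (bs : List α) (A : Set α) (cs : List α) : Prop :=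
  IndTuple Ind bs A (A ∪ {x | x ∈ cs})

section

variable {α : Type*} (Ind : α → Set α → Set α → Prop)

lemma union_setOf_mem_append (A : Set α) (ds es : List α) :
    A ∪ {x | x ∈ ds ++ es} = A ∪ {x | x ∈ ds} ∪ {x | x ∈ es} := by
  ext x
  simp [or_assoc]

lemma indTuple_append (ds es : List α) (A B : Set α) :
    IndTuple Ind (ds ++ es) A B ↔
      IndTuple Ind ds A B ∧ IndTuple Ind es (A ∪ {x | x ∈ ds}) (B ∪ {x | x ∈ ds}) := by
  induction ds generalizing A B with
  | nil => simp [IndTuple]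
  | cons d ds ih =>
    have hcons (S : Set α) : S ∪ {x | x ∈ d :: ds} = S ∪ {d} ∪ {x | x ∈ ds} := by
      ext x
      simp [or_left_comm, or_assoc]
    simp only [List.cons_append, IndTuple, ih, hcons, and_assoc]

lemma indTT_append_left_iff (bs es cs : List α) (A : Set α) :
    IndTT Ind (bs ++ es) A cs ↔
      IndTT Ind bs A cs ∧ IndTT Ind es (A ∪ {x | x ∈ bs}) cs := by
  simp only [IndTT, indTuple_append, Set.union_right_comm A {x | x ∈ cs}]

lemma indTT_append_right_iff {cs : List α}
    (htrans : ∀ A B C : Set α, A ⊆ B → B ⊆ C →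
      (IndTuple Ind cs A C ↔ IndTuple Ind cs A B ∧ IndTuple Ind cs B C))
    (bs es : List α) (A : Set α) :
    IndTT Ind cs A (bs ++ es) ↔
      IndTT Ind cs A bs ∧ IndTT Ind cs (A ∪ {x | x ∈ bs}) es := by
  rw [IndTT, union_setOf_mem_append]
  exact htrans _ _ _ Set.subset_union_left Set.subset_union_left

end

/-- Induction step for symmetry: assuming full transitivity for tuples and
symmetry for tuples of length `≤ n` as well as symmetry of single elements
against arbitrary tuples, symmetry holds for tuples of length `n + 1`. -/
theorem stmt_16 {α : Type*} (Ind : α → Set α → Set α → Prop) (n : ℕ)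
    (htrans : ∀ (ds : List α) (A B C : Set α), A ⊆ B → B ⊆ C →
      (IndTuple Ind ds A C ↔ IndTuple Ind ds A B ∧ IndTuple Ind ds B C))
    (hsymm : ∀ (bs cs : List α) (A : Set α), bs.length ≤ n → cs.length ≤ n →
      (IndTT Ind bs A cs ↔ IndTT Ind cs A bs))
    (hsymm1 : ∀ (b : α) (cs : List α) (A : Set α),
      IndTT Ind [b] A cs ↔ IndTT Ind cs A [b]) :
    ∀ (bs : List α) (b' : α) (cs : List α) (A : Set α),
      bs.length ≤ n → cs.length ≤ n →
      (IndTT Ind cs A (bs ++ [b']) ↔ IndTT Ind (bs ++ [b']) A cs) := by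
  intro bs b' cs A hbs hcs
  rw [indTT_append_right_iff Ind (htrans cs), indTT_append_left_iff,
    hsymm bs cs A hbs hcs, hsymm1]
end
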